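/- Let N ≥ 1, let t be a nonzero complex number, and set 2y = t + 1/t. Let S⁻¹(y) be the N×N upper-triangular banded matrix with entries 1 on the main diagonal, −2y on the first superdiagonal, 1 on the second superdiagonal, and 0 elsewhere. Then S⁻¹(y) · (U(t) · U(1/t)) = I_N and (U(t) · U(1/t)) · S⁻¹(y) = I_N; i.e., the inverse of S⁻¹(y) is the product U(t)U(1/t). -/

import Mathlib

/-! With `J` the nilpotent shift matrix (`J ^ N = 0`), `U(τ) = ∑_{k<N} (τJ)^k` is a finite
geometric series, hence the inverse of `1 - τJ`. The relation `2y = t + 1/t` makes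
`S⁻¹(y) = 1 - 2yJ + J²` factor as `(1 - t⁻¹J)(1 - tJ)`, which `U(t) U(1/t)` inverts. -/

open Matrix

/-- The `N×N` upper-triangular banded matrix `S⁻¹(y)` with `1` on the main
diagonal, `−2y` on the first superdiagonal and `1` on the second
superdiagonal. -/
def Sinv (N : ℕ) (y : ℂ) : Matrix (Fin N) (Fin N) ℂ := fun i j =>
  if (j : ℕ) = (i : ℕ) then 1
  else if (j : ℕ) = (i : ℕ) + 1 then -2 * y
  else if (j : ℕ) = (i : ℕ) + 2 then 1
  else 0

/-- The upper-triangular matrix `U(τ)` with entries `τ^{j−i}` for `i ≤ j`. -/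
def Umat (N : ℕ) (τ : ℂ) : Matrix (Fin N) (Fin N) ℂ := fun i j =>
  if (i : ℕ) ≤ (j : ℕ) then τ ^ ((j : ℕ) - (i : ℕ)) else 0

namespace Matrix

variable {n : ℕ} {R : Type*}

def upperShift (n : ℕ) (R : Type*) [Zero R] [One R] : Matrix (Fin n) (Fin n) R :=
  of fun i j => if (j : ℕ) = i + 1 then 1 else 0

theorem upperShift_apply [Zero R] [One R] (i j : Fin n) :
    upperShift n R i j = if (j : ℕ) = i + 1 then 1 else 0 :=
  rfl

theorem upperShift_pow_apply [Semiring R] (k : ℕ) (i j : Fin n) :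
    (upperShift n R ^ k) i j = if (j : ℕ) = i + k then 1 else 0 := by
  induction k generalizing j with
  | zero => simp [one_apply, Fin.ext_iff, eq_comm]
  | succ k ih =>
    simp only [pow_succ, mul_apply, ih, upperShift_apply, ite_mul, one_mul, zero_mul]
    rw [Fin.sum_univ_eq_sum_range (fun l => if l = (i : ℕ) + k then
      (if (j : ℕ) = l + 1 then (1 : R) else 0) else 0), Finset.sum_ite_eq']
    split_ifs <;> grind

theorem upperShift_pow_self [Semiring R] : upperShift n R ^ n = 0 := by
  ext i j
  rw [upperShift_pow_apply, if_neg (by omega), zero_apply]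

end Matrix

open Matrix Finset

theorem one_sub_smul_mul_one_sub_smul {R A : Type*} [CommSemiring R] [Ring A] [Algebra R A]
    (a b : R) (x : A) :
    (1 - a • x) * (1 - b • x) = 1 - (a + b) • x + (a * b) • x ^ 2 := by
  simp only [sub_mul, mul_sub, one_mul, mul_one, smul_mul_smul_comm, add_smul, sq]
  abel

theorem Umat_eq_geom_sum (N : ℕ) (τ : ℂ) :
    Umat N τ = ∑ k ∈ range N, (τ • upperShift N ℂ) ^ k := by
  ext i j
  simp only [smul_pow, Matrix.sum_apply, Matrix.smul_apply, upperShift_pow_apply, smul_eq_mul,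
    mul_ite, mul_one, mul_zero, Umat]
  split_ifs with hij
  · rw [sum_eq_single ((j : ℕ) - i)] <;> grind
  · exact (sum_eq_zero fun k _ => if_neg (by omega)).symm

theorem one_sub_smul_upperShift_mul_Umat (N : ℕ) (τ : ℂ) :
    (1 - τ • upperShift N ℂ) * Umat N τ = 1 := by
  rw [Umat_eq_geom_sum, mul_neg_geom_sum, smul_pow, upperShift_pow_self, smul_zero, sub_zero]

theorem Sinv_eq (N : ℕ) (y : ℂ) :
    Sinv N y = 1 - (2 * y) • upperShift N ℂ + upperShift N ℂ ^ 2 := by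
  ext i j
  simp only [Sinv, Matrix.add_apply, Matrix.sub_apply, Matrix.smul_apply, one_apply,
    upperShift_pow_apply, upperShift_apply, Fin.ext_iff, smul_eq_mul]
  split_ifs <;> first | omega | ring

theorem Sinv_inverse_eq_U_mul_U_general (N : ℕ) (t : ℂ) (ht : t ≠ 0)
    (y : ℂ) (hy : 2 * y = t + 1 / t) :
    Sinv N y * (Umat N t * Umat N (1 / t)) = 1 ∧
    (Umat N t * Umat N (1 / t)) * Sinv N y = 1 := by
  have hfactor : Sinv N y = (1 - (1 / t) • upperShift N ℂ) * (1 - t • upperShift N ℂ) := by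
    rw [one_sub_smul_mul_one_sub_smul, one_div_mul_cancel ht, one_smul, Sinv_eq, hy, add_comm t]
  have hleft : Sinv N y * (Umat N t * Umat N (1 / t)) = 1 := by
    rw [hfactor, mul_assoc, ← mul_assoc (1 - t • _), one_sub_smul_upperShift_mul_Umat, one_mul,
      one_sub_smul_upperShift_mul_Umat]
  exact ⟨hleft, mul_eq_one_comm.mp hleft⟩

/-- for `t ≠ 0` and `2y = t + 1/t`, the inverse of `S⁻¹(y)` is
the product `U(t) U(1/t)`. -/
theorem Sinv_inverse_eq_U_mul_U (N : ℕ) (hN : 1 ≤ N) (t : ℂ) (ht : t ≠ 0)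
    (y : ℂ) (hy : 2 * y = t + 1 / t) :
    Sinv N y * (Umat N t * Umat N (1 / t)) = 1 ∧
    (Umat N t * Umat N (1 / t)) * Sinv N y = 1 :=
  Sinv_inverse_eq_U_mul_U_general N t ht y hy
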